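/- Let ρ₀, ρ₁ be density operators with ‖ρ₀ − ρ₁‖₁ ≥ 2 − ε and let |ψ_{ρ_i}⟩_{RS} be purifications of ρ_i. Define |φ⟩ = (1/√2)(|0⟩_A|0⟩_B|ψ_{ρ₀}⟩_{RS} + |1⟩_A|1⟩_B|ψ_{ρ₁}⟩_{RS}) and ω_{A:BR} = Tr_S(|φ⟩⟨φ|). Then there exists a separable (across the A:BR cut) state σ with ‖ω_{A:BR} − σ‖₁ ≤ 2√ε. -/

import Mathlib

open Matrix Kronecker BigOperators ComplexOrder

noncomputable def traceNorm {n : Type*} [Fintype n] [DecidableEq n] (A : Matrix n n ℂ) : ℝ :=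
  (((Matrix.posSemidef_conjTranspose_mul_self A).1.eigenvectorUnitary : Matrix n n ℂ) *
    diagonal ((fun x : ℝ => (x : ℂ)) ∘ (√·) ∘ (Matrix.posSemidef_conjTranspose_mul_self A).1.eigenvalues) *
    (star (Matrix.posSemidef_conjTranspose_mul_self A).1.eigenvectorUnitary : Matrix n n ℂ)).trace.re

open scoped Classical in
noncomputable def matSqrt {n : Type*} [Fintype n] [DecidableEq n] (A : Matrix n n ℂ) : Matrix n n ℂ :=
  if h : A.PosSemidef then (h.1.eigenvectorUnitary : Matrix n n ℂ) *
    diagonal ((fun x : ℝ => (x : ℂ)) ∘ (√·) ∘ h.1.eigenvalues) * (star h.1.eigenvectorUnitary : Matrix n n ℂ) else 0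

noncomputable def fidelity {n : Type*} [Fintype n] [DecidableEq n] (ρ σ : Matrix n n ℂ) : ℝ :=
  (traceNorm (matSqrt ρ * matSqrt σ)) ^ 2

def IsDensity {n : Type*} [Fintype n] [DecidableEq n] (ρ : Matrix n n ℂ) : Prop :=
  ρ.PosSemidef ∧ ρ.trace = 1

def SeparableState {a b : Type*} [Fintype a] [Fintype b] [DecidableEq a] [DecidableEq b]
    (ρ : Matrix (a × b) (a × b) ℂ) : Prop :=
  ∃ (m : ℕ) (p : Fin m → ℝ) (σ : Fin m → Matrix a a ℂ) (τ : Fin m → Matrix b b ℂ),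
    (∀ i, 0 ≤ p i) ∧ (∑ i, p i = 1) ∧ (∀ i, IsDensity (σ i)) ∧ (∀ i, IsDensity (τ i)) ∧
    ρ = ∑ i, (p i : ℂ) • (σ i ⊗ₖ τ i)

noncomputable def permUnitary {b : Type*} [Fintype b] [DecidableEq b] {k : ℕ}
    (π : Equiv.Perm (Fin k)) : Matrix (Fin k → b) (Fin k → b) ℂ :=
  Equiv.Perm.permMatrix ℂ (Equiv.arrowCongr π (Equiv.refl b))

def IsKExtension {a b : Type*} [Fintype a] [Fintype b] [DecidableEq a] [DecidableEq b] (m : ℕ)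
    (ρ : Matrix (a × b) (a × b) ℂ)
    (ω : Matrix (a × (Fin (m + 1) → b)) (a × (Fin (m + 1) → b)) ℂ) : Prop :=
  ω.PosSemidef ∧ ω.trace = 1 ∧
  (∀ π : Equiv.Perm (Fin (m + 1)),
    ((1 : Matrix a a ℂ) ⊗ₖ permUnitary π) * ω * ((1 : Matrix a a ℂ) ⊗ₖ permUnitary π)ᴴ = ω) ∧
  (∀ p q : a × b, ρ p q = ∑ r : Fin m → b, ω (p.1, Fin.cons p.2 r) (q.1, Fin.cons q.2 r))

/-- `ρ` is `k`-extendible (with `k` copies of the `B` system). -/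
def IsKExtendible {a b : Type*} [Fintype a] [Fintype b] [DecidableEq a] [DecidableEq b] (k : ℕ)
    (ρ : Matrix (a × b) (a × b) ℂ) : Prop :=
  ∃ m : ℕ, k = m + 1 ∧ ∃ ω, IsKExtension m ρ ω

def IsPOVM {x b : Type*} [Fintype x] [Fintype b] [DecidableEq b] (Λ : x → Matrix b b ℂ) : Prop :=
  (∀ i, (Λ i).PosSemidef) ∧ ∑ i, Λ i = 1

noncomputable def povmOut {a b x : Type*} [Fintype a] [Fintype b] [Fintype x] [DecidableEq x]
    (Λ : x → Matrix b b ℂ) (X : Matrix (a × b) (a × b) ℂ) : Matrix (a × x) (a × x) ℂ :=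
  fun p q => if p.2 = q.2 then ∑ j : b, ∑ j' : b, (Λ p.2) j j' * X (p.1, j') (q.1, j) else 0

noncomputable def loccDist {a b : Type*} [Fintype a] [Fintype b] [DecidableEq a] [DecidableEq b]
    (ρ σ : Matrix (a × b) (a × b) ℂ) : ℝ :=
  sSup {r : ℝ | ∃ (x : Type) (_ : Fintype x) (_ : DecidableEq x) (Λ : x → Matrix b b ℂ),
    IsPOVM Λ ∧ r = traceNorm (povmOut Λ ρ - povmOut Λ σ)}

noncomputable def bellPhi {r s : Type*} (ψ : Fin 2 → (r × s) → ℂ) :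
    (Fin 2 × ((Fin 2 × r) × s)) → ℂ :=
  fun p => if p.1 = p.2.1.1 then ((Real.sqrt 2 : ℝ) : ℂ)⁻¹ * ψ p.1 (p.2.1.2, p.2.2) else 0

noncomputable def bellOmega {r s : Type*} [Fintype s] (ψ : Fin 2 → (r × s) → ℂ) :
    Matrix (Fin 2 × (Fin 2 × r)) (Fin 2 × (Fin 2 × r)) ℂ :=
  fun p q => ∑ v : s,
    bellPhi ψ (p.1, (p.2, v)) * (starRingEnd ℂ) (bellPhi ψ (q.1, (q.2, v)))

/-!
Only the coherence between the two branches separates `ω` from the dephased state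
`σ = ½ (|00⟩⟨00| ⊗ Tr_S ψ₀ψ₀* + |11⟩⟨11| ⊗ Tr_S ψ₁ψ₁*)`: `ω - σ = ½ (Y + Yᴴ)`, where `Y` places
`K = Tr_S |ψ₁⟩⟨ψ₀|` isometrically in an off-diagonal block, so `‖ω - σ‖₁ ≤ ‖K‖₁`. Writing
`‖K‖₁ = tr (W K)` for a unitary `W` (singular value decomposition) makes `‖K‖₁` the overlap of `ψ₀`
with `(W ⊗ 1) ψ₁`, another purification of `ρ₁`. Monotonicity of the trace norm under partial
trace and the pure-state identity `(‖xx* - yy*‖₁ / 2)² + |⟨x, y⟩|² = 1` then give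
`(‖ρ₀ - ρ₁‖₁ / 2)² + ‖K‖₁² ≤ 1`, hence `‖K‖₁² ≤ ε`.
-/

open scoped MatrixOrder

section TraceNorm

variable {n : Type*} [Fintype n] [DecidableEq n]

lemma sum_star_mul_of_conjTranspose_mul_self_eq_diagonal {B : Matrix n n ℂ} {d : n → ℝ}
    (hB : Bᴴ * B = diagonal fun i => (d i : ℂ)) (i j : n) :
    ∑ a, star (B a i) * B a j = if i = j then (d i : ℂ) else 0 := by
  simpa [mul_apply, diagonal_apply] using congrFun (congrFun hB i) j

lemma eq_sum_norm_sq_of_conjTranspose_mul_self_eq_diagonal {B : Matrix n n ℂ} {d : n → ℝ}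
    (hB : Bᴴ * B = diagonal fun i => (d i : ℂ)) (i : n) : d i = ∑ a, ‖B a i‖ ^ 2 := by
  have h := sum_star_mul_of_conjTranspose_mul_self_eq_diagonal hB i i
  simp only [if_true, RCLike.star_def, Complex.conj_mul'] at h
  exact_mod_cast h.symm

lemma orthonormal_of_conjTranspose_mul_self_eq_diagonal {B : Matrix n n ℂ} {d : n → ℝ}
    (hB : Bᴴ * B = diagonal fun i => (d i : ℂ)) :
    Orthonormal ℂ ({i | d i ≠ 0}.domRestrict
      fun i => (WithLp.toLp 2 fun a => ((√(d i))⁻¹ : ℂ) * B a i : EuclideanSpace ℂ n)) := by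
  rw [orthonormal_iff_ite]
  rintro ⟨i, hi⟩ ⟨j, hj⟩
  simp only [Set.domRestrict_apply, Subtype.mk.injEq, EuclideanSpace.inner_eq_star_dotProduct]
  calc _ = ((√(d j))⁻¹ : ℂ) * ((√(d i))⁻¹ : ℂ) * ∑ a, star (B a i) * B a j := by
        simp only [dotProduct, Pi.star_apply, star_mul', Finset.mul_sum, RCLike.star_def,
          map_inv₀, Complex.conj_ofReal]
        exact Finset.sum_congr rfl fun a _ => by ring
    _ = _ := by
        rw [sum_star_mul_of_conjTranspose_mul_self_eq_diagonal hB]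
        split_ifs with hij
        · subst hij
          have hd := eq_sum_norm_sq_of_conjTranspose_mul_self_eq_diagonal hB i
          have hpos : 0 < d i := lt_of_le_of_ne (by rw [hd]; positivity) (Ne.symm hi)
          rw [← mul_inv, ← Complex.ofReal_mul, Real.mul_self_sqrt hpos.le]
          exact inv_mul_cancel₀ (by exact_mod_cast hpos.ne')
        · ring

lemma exists_mem_unitary_mul_diagonal_sqrt {B : Matrix n n ℂ} {d : n → ℝ}
    (hB : Bᴴ * B = diagonal fun i => (d i : ℂ)) :
    ∃ N ∈ unitary (Matrix n n ℂ), B = N * diagonal fun i => ((√(d i) : ℝ) : ℂ) := by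
  have hd := eq_sum_norm_sq_of_conjTranspose_mul_self_eq_diagonal hB
  obtain ⟨b, hb⟩ := (orthonormal_of_conjTranspose_mul_self_eq_diagonal hB)
    |>.exists_orthonormalBasis_extension_of_card_eq (by simp)
  refine ⟨(EuclideanSpace.basisFun n ℂ).toBasis.toMatrix b,
    (EuclideanSpace.basisFun n ℂ).toMatrix_orthonormalBasis_mem_unitary b, ?_⟩
  ext a i
  rw [mul_diagonal, Module.Basis.toMatrix_apply]
  simp only [EuclideanSpace.basisFun_toBasis, PiLp.basisFun_repr]
  by_cases hi : d i = 0
  · have hcol : B a i = 0 := by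
      rw [hd i, Finset.sum_eq_zero_iff_of_nonneg fun _ _ => sq_nonneg _] at hi
      simpa using hi a (Finset.mem_univ a)
    simp [hcol, hi]
  · rw [hb i hi]
    have hpos : 0 < d i := lt_of_le_of_ne (by rw [hd]; positivity) (Ne.symm hi)
    have : ((√(d i) : ℝ) : ℂ) ≠ 0 := by exact_mod_cast (Real.sqrt_pos.mpr hpos).ne'
    simp [mul_comm, this]

noncomputable def singularValues (A : Matrix n n ℂ) (i : n) : ℝ :=
  √((posSemidef_conjTranspose_mul_self A).1.eigenvalues i)

lemma traceNorm_eq_sum_singularValues (A : Matrix n n ℂ) :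
    traceNorm A = ∑ i, singularValues A i := by
  have hU := (posSemidef_conjTranspose_mul_self A).1.eigenvectorUnitary.2
  rw [traceNorm, trace_mul_comm, ← Matrix.mul_assoc, Unitary.star_mul_self_of_mem hU,
    Matrix.one_mul, trace_diagonal, Complex.re_sum]
  rfl

lemma traceNorm_nonneg (A : Matrix n n ℂ) : 0 ≤ traceNorm A := by
  rw [traceNorm_eq_sum_singularValues]
  exact Finset.sum_nonneg fun i _ => Real.sqrt_nonneg _

lemma exists_mem_unitary_eq_mul_diagonal_singularValues (A : Matrix n n ℂ) :
    ∃ N ∈ unitary (Matrix n n ℂ), ∃ U ∈ unitary (Matrix n n ℂ),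
      A = N * diagonal (fun i => (singularValues A i : ℂ)) * star U := by
  have hA := posSemidef_conjTranspose_mul_self A
  set U := (hA.1.eigenvectorUnitary : Matrix n n ℂ)
  have hU : U ∈ unitary (Matrix n n ℂ) := hA.1.eigenvectorUnitary.2
  have hAU : (A * U)ᴴ * (A * U) = diagonal fun i => (hA.1.eigenvalues i : ℂ) := by
    have h := hA.1.conjStarAlgAut_star_eigenvectorUnitary
    rw [Unitary.conjStarAlgAut_star_apply] at h
    rw [conjTranspose_mul, ← star_eq_conjTranspose U]
    convert h using 1
    · simp only [Matrix.mul_assoc, U]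
    · rfl
  obtain ⟨N, hN, hN_eq⟩ := exists_mem_unitary_mul_diagonal_sqrt hAU
  refine ⟨N, hN, U, hU, ?_⟩
  calc A = A * U * star U := by
        rw [Matrix.mul_assoc, Unitary.mul_star_self_of_mem hU, Matrix.mul_one]
    _ = _ := by rw [hN_eq]; rfl

lemma norm_trace_mul_le_traceNorm {V : Matrix n n ℂ} (hV : V ∈ unitary (Matrix n n ℂ))
    (A : Matrix n n ℂ) : ‖(V * A).trace‖ ≤ traceNorm A := by
  obtain ⟨N, hN, U, hU, hA⟩ := exists_mem_unitary_eq_mul_diagonal_singularValues A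
  have hX : star U * V * N ∈ unitaryGroup n ℂ := mul_mem (mul_mem (Unitary.star_mem hU) hV) hN
  have htr : (V * A).trace = ∑ i, (star U * V * N) i i * singularValues A i := by
    conv_lhs => rw [hA, ← Matrix.mul_assoc, ← Matrix.mul_assoc, trace_mul_comm,
      ← Matrix.mul_assoc, ← Matrix.mul_assoc]
    simp [trace, mul_diagonal]
  rw [htr, traceNorm_eq_sum_singularValues]
  refine (norm_sum_le _ _).trans (Finset.sum_le_sum fun i _ => ?_)
  have hs : 0 ≤ singularValues A i := Real.sqrt_nonneg _
  rw [norm_mul, Complex.norm_real, Real.norm_of_nonneg hs]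
  exact mul_le_of_le_one_left hs (entry_norm_bound_of_unitary hX i i)

lemma exists_mem_unitary_trace_mul_eq_traceNorm (A : Matrix n n ℂ) :
    ∃ V ∈ unitary (Matrix n n ℂ), (V * A).trace = traceNorm A := by
  obtain ⟨N, hN, U, hU, hA⟩ := exists_mem_unitary_eq_mul_diagonal_singularValues A
  refine ⟨U * star N, mul_mem hU (Unitary.star_mem hN), ?_⟩
  rw [traceNorm_eq_sum_singularValues]
  conv_lhs => rw [hA]
  simp only [Matrix.mul_assoc]
  rw [← Matrix.mul_assoc (star N), Unitary.star_mul_self_of_mem hN, Matrix.one_mul,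
    trace_mul_comm, Matrix.mul_assoc, Unitary.star_mul_self_of_mem hU, Matrix.mul_one]
  simp [trace_diagonal]

lemma traceNorm_add_le (A B : Matrix n n ℂ) :
    traceNorm (A + B) ≤ traceNorm A + traceNorm B := by
  obtain ⟨V, hV, h⟩ := exists_mem_unitary_trace_mul_eq_traceNorm (A + B)
  have h_re := congrArg Complex.re h
  rw [Matrix.mul_add, trace_add, Complex.add_re, Complex.ofReal_re] at h_re
  rw [← h_re]
  exact add_le_add ((Complex.re_le_norm _).trans (norm_trace_mul_le_traceNorm hV A))
    ((Complex.re_le_norm _).trans (norm_trace_mul_le_traceNorm hV B))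

lemma traceNorm_smul_le (c : ℂ) (A : Matrix n n ℂ) : traceNorm (c • A) ≤ ‖c‖ * traceNorm A := by
  obtain ⟨V, hV, h⟩ := exists_mem_unitary_trace_mul_eq_traceNorm (c • A)
  have h_norm := congrArg norm h
  rw [Complex.norm_real, Real.norm_of_nonneg (traceNorm_nonneg _), Matrix.mul_smul, trace_smul,
    norm_smul] at h_norm
  rw [← h_norm]
  exact mul_le_mul_of_nonneg_left (norm_trace_mul_le_traceNorm hV A) (norm_nonneg c)

lemma traceNorm_smul (c : ℂ) (A : Matrix n n ℂ) : traceNorm (c • A) = ‖c‖ * traceNorm A := by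
  refine le_antisymm (traceNorm_smul_le c A) ?_
  rcases eq_or_ne c 0 with rfl | hc
  · simpa using traceNorm_nonneg _
  calc ‖c‖ * traceNorm A = ‖c‖ * traceNorm (c⁻¹ • c • A) := by rw [inv_smul_smul₀ hc]
    _ ≤ ‖c‖ * (‖c⁻¹‖ * traceNorm (c • A)) :=
        mul_le_mul_of_nonneg_left (traceNorm_smul_le _ _) (norm_nonneg c)
    _ = traceNorm (c • A) := by
        rw [norm_inv, ← mul_assoc, mul_inv_cancel₀ (norm_ne_zero_iff.mpr hc), one_mul]

lemma traceNorm_conjTranspose_le (A : Matrix n n ℂ) : traceNorm Aᴴ ≤ traceNorm A := by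
  obtain ⟨V, hV, h⟩ := exists_mem_unitary_trace_mul_eq_traceNorm Aᴴ
  have h_norm := congrArg norm h
  rw [Complex.norm_real, Real.norm_of_nonneg (traceNorm_nonneg _), trace_mul_comm,
    ← conjTranspose_conjTranspose V, ← conjTranspose_mul, trace_conjTranspose, norm_star,
    ← star_eq_conjTranspose] at h_norm
  rw [← h_norm]
  exact norm_trace_mul_le_traceNorm (Unitary.star_mem hV) A

lemma traceNorm_conjTranspose (A : Matrix n n ℂ) : traceNorm Aᴴ = traceNorm A :=
  le_antisymm (traceNorm_conjTranspose_le A) (by simpa using traceNorm_conjTranspose_le Aᴴ)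

lemma traceNorm_eq_re_trace_sqrt (A : Matrix n n ℂ) :
    traceNorm A = (CFC.sqrt (Aᴴ * A)).trace.re := by
  have hA := posSemidef_conjTranspose_mul_self A
  rw [CFC.sqrt_eq_real_sqrt _ hA.nonneg, cfcₙ_eq_cfc, hA.1.cfc_eq]
  rfl

lemma sqrt_mul_mul_conjTranspose {N : Type*} [Fintype N] [DecidableEq N] {Q : Matrix N n ℂ}
    (hQ : Qᴴ * Q = 1) {X : Matrix n n ℂ} (hX : X.PosSemidef) :
    CFC.sqrt (Q * X * Qᴴ) = Q * CFC.sqrt X * Qᴴ := by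
  refine CFC.sqrt_unique ?_ (nonneg_iff_posSemidef.mpr
    ((nonneg_iff_posSemidef.mp (CFC.sqrt_nonneg X)).mul_mul_conjTranspose_same Q))
  calc Q * CFC.sqrt X * Qᴴ * (Q * CFC.sqrt X * Qᴴ) = Q * (CFC.sqrt X * CFC.sqrt X) * Qᴴ := by
        simp only [Matrix.mul_assoc, ← Matrix.mul_assoc Qᴴ Q, hQ, Matrix.one_mul]
    _ = Q * X * Qᴴ := by rw [CFC.sqrt_mul_sqrt_self X hX.nonneg]

lemma traceNorm_mul_mul_conjTranspose {N : Type*} [Fintype N] [DecidableEq N]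
    {P Q : Matrix N n ℂ} (hP : Pᴴ * P = 1) (hQ : Qᴴ * Q = 1) (M : Matrix n n ℂ) :
    traceNorm (P * M * Qᴴ) = traceNorm M := by
  have h : (P * M * Qᴴ)ᴴ * (P * M * Qᴴ) = Q * (Mᴴ * M) * Qᴴ := by
    simp only [conjTranspose_mul, conjTranspose_conjTranspose, Matrix.mul_assoc,
      ← Matrix.mul_assoc Pᴴ P, hP, Matrix.one_mul]
  rw [traceNorm_eq_re_trace_sqrt, traceNorm_eq_re_trace_sqrt, h,
    sqrt_mul_mul_conjTranspose hQ (posSemidef_conjTranspose_mul_self M), trace_mul_comm,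
    ← Matrix.mul_assoc, hQ, Matrix.one_mul]

end TraceNorm

section PureStates

variable {n : Type*} [Fintype n]

lemma traceNorm_eq_of_mul_mul_self_eq_smul [DecidableEq n] {H : Matrix n n ℂ}
    (hH : H.IsHermitian) {c : ℝ} (hc : 0 < c) (h : H * H * H = (c : ℂ) • H) :
    traceNorm H = (H * H).trace.re / √c := by
  have habs : CFC.sqrt (H * H) = ((√c : ℂ))⁻¹ • (H * H) := by
    refine CFC.sqrt_unique ?_ ?_
    · rw [smul_mul_smul_comm, ← Matrix.mul_assoc, h, smul_mul_assoc, smul_smul, ← mul_inv,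
        ← Complex.ofReal_mul, Real.mul_self_sqrt hc.le, inv_mul_cancel₀ (by exact_mod_cast hc.ne'),
        one_smul]
    · have hHH : (H * H).PosSemidef := by
        simpa [hH.eq] using posSemidef_conjTranspose_mul_self H
      exact nonneg_iff_posSemidef.mpr (hHH.smul (by positivity))
  rw [traceNorm_eq_re_trace_sqrt, hH.eq, habs, trace_smul, smul_eq_mul, ← Complex.ofReal_inv,
    Complex.re_ofReal_mul, div_eq_inv_mul]

variable {x y : n → ℂ}

lemma vecMulVec_sub_vecMulVec_cube (hx : star x ⬝ᵥ x = 1) (hy : star y ⬝ᵥ y = 1) :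
    let H := vecMulVec x (star x) - vecMulVec y (star y)
    H * H * H = (1 - (star x ⬝ᵥ y) * (star y ⬝ᵥ x)) • H := by
  intro H
  simp only [H, sub_mul, mul_sub, vecMulVec_mul_vecMulVec, smul_mul_assoc, hx, hy,
    vecMulVec_smul, one_smul, smul_sub, smul_smul]
  match_scalars <;> ring

lemma trace_vecMulVec_sub_vecMulVec_sq (hx : star x ⬝ᵥ x = 1) (hy : star y ⬝ᵥ y = 1) :
    let H := vecMulVec x (star x) - vecMulVec y (star y)
    (H * H).trace = 2 * (1 - (star x ⬝ᵥ y) * (star y ⬝ᵥ x)) := by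
  intro H
  simp only [H, sub_mul, mul_sub, vecMulVec_mul_vecMulVec, hx, hy, vecMulVec_smul, one_smul,
    trace_sub, trace_smul, trace_vecMulVec, smul_eq_mul]
  rw [dotProduct_comm x, dotProduct_comm y, dotProduct_comm x, dotProduct_comm y, hx, hy]
  ring

lemma traceNorm_vecMulVec_sub_vecMulVec [DecidableEq n] (hx : star x ⬝ᵥ x = 1)
    (hy : star y ⬝ᵥ y = 1) :
    (traceNorm (vecMulVec x (star x) - vecMulVec y (star y)) / 2) ^ 2 + ‖star x ⬝ᵥ y‖ ^ 2 = 1 := by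
  set H := vecMulVec x (star x) - vecMulVec y (star y)
  set c := 1 - ‖star x ⬝ᵥ y‖ ^ 2
  have hc_eq : ((c : ℝ) : ℂ) = 1 - (star x ⬝ᵥ y) * (star y ⬝ᵥ x) := by
    have hconj : starRingEnd ℂ (star x ⬝ᵥ y) = star y ⬝ᵥ x := by
      rw [← RCLike.star_def, star_dotProduct, star_star]
    rw [← hconj, Complex.mul_conj']
    push_cast [c]
    ring
  have hH : H.IsHermitian := by
    simp only [H, IsHermitian, conjTranspose_sub, conjTranspose_vecMulVec, star_star]
  have htr : (H * H).trace = 2 * c := by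
    rw [hc_eq]
    exact trace_vecMulVec_sub_vecMulVec_sq hx hy
  have hc : 0 ≤ c := by
    have h := (RCLike.nonneg_iff.mp (posSemidef_conjTranspose_mul_self H).trace_nonneg).1
    rw [hH.eq, htr] at h
    simpa using h
  suffices traceNorm H = 2 * √c by
    rw [this, mul_div_cancel_left₀ _ two_ne_zero, Real.sq_sqrt hc]
    ring
  rcases hc.eq_or_lt with hc0 | hcpos
  · have h0 : (Hᴴ * H).trace = 0 := by rw [hH.eq, htr, ← hc0]; simp
    rw [trace_conjTranspose_mul_self_eq_zero_iff] at h0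
    rw [h0, ← hc0, Real.sqrt_zero, mul_zero]
    simpa using traceNorm_smul 0 (0 : Matrix n n ℂ)
  · have hcube : H * H * H = (c : ℂ) • H := by
      rw [hc_eq]
      exact vecMulVec_sub_vecMulVec_cube hx hy
    rw [traceNorm_eq_of_mul_mul_self_eq_smul hH hcpos hcube, htr]
    simp [Real.div_sqrt, mul_div_assoc]

end PureStates

section PartialTrace

variable {r s α : Type*} [Fintype r]

def partialTraceFst [AddCommMonoid α] (X : Matrix (r × s) (r × s) α) : Matrix s s α :=
  of fun v w => ∑ u, X (u, v) (u, w)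

lemma partialTraceFst_sub [AddCommGroup α] (X Y : Matrix (r × s) (r × s) α) :
    partialTraceFst (X - Y) = partialTraceFst X - partialTraceFst Y := by
  ext v w
  simp [partialTraceFst]

variable [Fintype s]

def partialTraceSnd [AddCommMonoid α] (X : Matrix (r × s) (r × s) α) : Matrix r r α :=
  of fun u u' => ∑ v, X (u, v) (u', v)

lemma trace_partialTraceFst [AddCommMonoid α] (X : Matrix (r × s) (r × s) α) :
    (partialTraceFst X).trace = X.trace := by
  simp [partialTraceFst, trace, Fintype.sum_prod_type, Finset.sum_comm (γ := r)]

lemma trace_partialTraceSnd [AddCommMonoid α] (X : Matrix (r × s) (r × s) α) :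
    (partialTraceSnd X).trace = X.trace := by
  simp [partialTraceSnd, trace, Fintype.sum_prod_type]

lemma trace_one_kronecker_mul [DecidableEq r] [Semiring α] (B : Matrix s s α)
    (X : Matrix (r × s) (r × s) α) :
    ((1 : Matrix r r α) ⊗ₖ B * X).trace = (B * partialTraceFst X).trace := by
  simp only [trace, diag_apply, mul_apply, kroneckerMap_apply, one_apply, ite_mul, one_mul,
    zero_mul, Fintype.sum_prod_type, Finset.sum_ite_irrel, Finset.sum_const_zero, Finset.sum_ite_eq,
    Finset.mem_univ, if_true, partialTraceFst, of_apply, Finset.mul_sum]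
  rw [Finset.sum_comm]
  exact Finset.sum_congr rfl fun _ _ => Finset.sum_comm

lemma trace_kronecker_one_mul [DecidableEq s] [Semiring α] (W : Matrix r r α)
    (X : Matrix (r × s) (r × s) α) :
    (W ⊗ₖ (1 : Matrix s s α) * X).trace = (W * partialTraceSnd X).trace := by
  simp only [trace, diag_apply, mul_apply, kroneckerMap_apply, one_apply, mul_ite, mul_one,
    mul_zero, ite_mul, zero_mul, Fintype.sum_prod_type, Finset.sum_ite_eq, Finset.mem_univ,
    if_true, partialTraceSnd, of_apply, Finset.mul_sum]
  exact Finset.sum_congr rfl fun _ _ => Finset.sum_comm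

variable [DecidableEq r] [DecidableEq s]

lemma traceNorm_partialTraceFst_le (X : Matrix (r × s) (r × s) ℂ) :
    traceNorm (partialTraceFst X) ≤ traceNorm X := by
  obtain ⟨V, hV, h⟩ := exists_mem_unitary_trace_mul_eq_traceNorm (partialTraceFst X)
  calc traceNorm (partialTraceFst X) = ‖(V * partialTraceFst X).trace‖ := by
        rw [h, Complex.norm_real, Real.norm_of_nonneg (traceNorm_nonneg _)]
    _ = ‖((1 : Matrix r r ℂ) ⊗ₖ V * X).trace‖ := by rw [trace_one_kronecker_mul]
    _ ≤ traceNorm X := norm_trace_mul_le_traceNorm (kronecker_mem_unitary (one_mem _) hV) X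

lemma partialTraceFst_kronecker_one_mul_mul_conjTranspose {W : Matrix r r ℂ} (hW : Wᴴ * W = 1)
    (X : Matrix (r × s) (r × s) ℂ) :
    partialTraceFst (W ⊗ₖ (1 : Matrix s s ℂ) * X * (W ⊗ₖ (1 : Matrix s s ℂ))ᴴ) =
      partialTraceFst X := by
  have h_entry : ∀ (Y : Matrix (r × s) (r × s) ℂ) v w,
      partialTraceFst Y v w = ((1 : Matrix r r ℂ) ⊗ₖ single w v 1 * Y).trace := by
    intro Y v w
    rw [trace_one_kronecker_mul, trace_single_mul, one_smul]
  ext v w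
  rw [h_entry, h_entry, ← Matrix.mul_assoc, trace_mul_cycle, ← Matrix.mul_assoc,
    conjTranspose_kronecker, conjTranspose_one, ← mul_kronecker_mul, ← mul_kronecker_mul,
    Matrix.mul_one, hW, Matrix.one_mul, Matrix.mul_one]

end PartialTrace

section Purification

variable {r s : Type*} [Fintype r] [Fintype s] [DecidableEq r] [DecidableEq s]

lemma vecMulVec_mulVec_star_mulVec {m n : Type*} [Fintype n] (M : Matrix m n ℂ) (y : n → ℂ) :
    vecMulVec (M *ᵥ y) (star (M *ᵥ y)) = M * vecMulVec y (star y) * Mᴴ := by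
  rw [star_mulVec, mul_vecMulVec, vecMulVec_mul]

theorem traceNorm_partialTraceFst_sub_sq_add_sq_le_one {x y : r × s → ℂ}
    (hx : star x ⬝ᵥ x = 1) (hy : star y ⬝ᵥ y = 1) :
    (traceNorm (partialTraceFst (vecMulVec x (star x)) - partialTraceFst (vecMulVec y (star y)))
      / 2) ^ 2 + traceNorm (partialTraceSnd (vecMulVec y (star x))) ^ 2 ≤ 1 := by
  obtain ⟨W, hW, hW_tr⟩ :=
    exists_mem_unitary_trace_mul_eq_traceNorm (partialTraceSnd (vecMulVec y (star x)))
  set U := W ⊗ₖ (1 : Matrix s s ℂ)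
  have hU : Uᴴ * U = 1 := Unitary.star_mul_self_of_mem (kronecker_mem_unitary hW (one_mem _))
  set y' := U *ᵥ y
  have hy' : star y' ⬝ᵥ y' = 1 := by
    rw [star_mulVec, ← dotProduct_mulVec, mulVec_mulVec, hU, one_mulVec, hy]
  have h_reduced :
      partialTraceFst (vecMulVec y' (star y')) = partialTraceFst (vecMulVec y (star y)) := by
    rw [vecMulVec_mulVec_star_mulVec]
    exact partialTraceFst_kronecker_one_mul_mul_conjTranspose (Unitary.star_mul_self_of_mem hW) _
  have h_overlap : ‖star x ⬝ᵥ y'‖ = traceNorm (partialTraceSnd (vecMulVec y (star x))) := by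
    rw [dotProduct_comm, ← trace_vecMulVec, ← mul_vecMulVec, trace_kronecker_one_mul, hW_tr,
      Complex.norm_real, Real.norm_of_nonneg (traceNorm_nonneg _)]
  have h_mono :
      traceNorm (partialTraceFst (vecMulVec x (star x)) - partialTraceFst (vecMulVec y (star y)))
        ≤ traceNorm (vecMulVec x (star x) - vecMulVec y' (star y')) := by
    rw [← h_reduced, ← partialTraceFst_sub]
    exact traceNorm_partialTraceFst_le _
  rw [← h_overlap, ← traceNorm_vecMulVec_sub_vecMulVec hx hy']
  gcongr
  exact div_nonneg (traceNorm_nonneg _) two_pos.le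

end Purification

section Density

variable {n : Type*} [Fintype n] [DecidableEq n]

lemma isDensity_single (i : n) : IsDensity (single i i (1 : ℂ)) := by
  refine ⟨?_, trace_single_eq_same i 1⟩
  have h := posSemidef_vecMulVec_self_star (Pi.single i (1 : ℂ))
  rwa [← Pi.single_star, star_one, ← single_eq_single_vecMulVec_single] at h

lemma IsDensity.kronecker {m : Type*} [Fintype m] [DecidableEq m] {A : Matrix n n ℂ}
    {B : Matrix m m ℂ} (hA : IsDensity A) (hB : IsDensity B) : IsDensity (A ⊗ₖ B) :=
  ⟨hA.1.kronecker hB.1, by rw [trace_kronecker, hA.2, hB.2, one_mul]⟩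

lemma isDensity_partialTraceSnd_vecMulVec {r s : Type*} [Fintype r] [Fintype s] [DecidableEq r]
    {x : r × s → ℂ} (hx : star x ⬝ᵥ x = 1) :
    IsDensity (partialTraceSnd (vecMulVec x (star x))) := by
  have h : partialTraceSnd (vecMulVec x (star x)) =
      (of fun u v => x (u, v)) * (of fun u v => x (u, v))ᴴ := by
    ext u u'
    simp [partialTraceSnd, mul_apply, vecMulVec_apply]
  refine ⟨h ▸ posSemidef_self_mul_conjTranspose _, ?_⟩
  rw [trace_partialTraceSnd, trace_vecMulVec, dotProduct_comm, hx]

end Density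

section BellState

variable {r s : Type*} [Fintype s]

lemma conjTranspose_one_submatrix_mul_self {m N : Type*} [Fintype N] [DecidableEq N]
    [DecidableEq m] {f : m → N} (hf : Function.Injective f) :
    ((1 : Matrix N N ℂ).submatrix id f)ᴴ * (1 : Matrix N N ℂ).submatrix id f = 1 := by
  rw [conjTranspose_submatrix, conjTranspose_one, ← submatrix_mul _ _ _ _ _ Function.bijective_id,
    Matrix.one_mul, submatrix_one _ hf]

noncomputable def dephasedState (ψ : Fin 2 → (r × s) → ℂ) :
    Matrix (Fin 2 × (Fin 2 × r)) (Fin 2 × (Fin 2 × r)) ℂ :=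
  ∑ i, ((1 / 2 : ℝ) : ℂ) •
    (single i i 1 ⊗ₖ (single i i 1 ⊗ₖ partialTraceSnd (vecMulVec (ψ i) (star (ψ i)))))

lemma separableState_dephasedState [Fintype r] [DecidableEq r] {ψ : Fin 2 → (r × s) → ℂ}
    (hψ : ∀ i, star (ψ i) ⬝ᵥ ψ i = 1) :
    SeparableState (dephasedState ψ) :=
  ⟨2, fun _ => 1 / 2, fun i => single i i 1,
    fun i => single i i 1 ⊗ₖ partialTraceSnd (vecMulVec (ψ i) (star (ψ i))),
    fun _ => by norm_num, by norm_num, fun i => isDensity_single i,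
    fun i => (isDensity_single i).kronecker (isDensity_partialTraceSnd_vecMulVec (hψ i)), rfl⟩

lemma bellOmega_apply (ψ : Fin 2 → (r × s) → ℂ) (p q : Fin 2 × (Fin 2 × r)) :
    bellOmega ψ p q = if p.1 = p.2.1 ∧ q.1 = q.2.1 then
      2⁻¹ * ∑ v, ψ p.1 (p.2.2, v) * starRingEnd ℂ (ψ q.1 (q.2.2, v)) else 0 := by
  have h2 : ∀ z w : ℂ, ((√2 : ℝ) : ℂ)⁻¹ * z * (((√2 : ℝ) : ℂ)⁻¹ * w) = 2⁻¹ * (z * w) := by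
    intro z w
    rw [mul_mul_mul_comm, ← mul_inv, ← Complex.ofReal_mul, Real.mul_self_sqrt zero_le_two]
    norm_num
  by_cases hp : p.1 = p.2.1 <;> by_cases hq : q.1 = q.2.1 <;>
    simp [bellOmega, bellPhi, hp, hq, Finset.mul_sum, h2]

lemma traceNorm_bellOmega_sub_dephasedState_le [Fintype r] [DecidableEq r] [DecidableEq s]
    (ψ : Fin 2 → (r × s) → ℂ) :
    traceNorm (bellOmega ψ - dephasedState ψ) ≤
      traceNorm (partialTraceSnd (vecMulVec (ψ 1) (star (ψ 0)))) := by
  set K := partialTraceSnd (vecMulVec (ψ 1) (star (ψ 0)))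
  let E : Fin 2 → Matrix (Fin 2 × (Fin 2 × r)) r ℂ :=
    fun a => (1 : Matrix _ _ ℂ).submatrix id fun u => (a, a, u)
  have hE : ∀ a, (E a)ᴴ * E a = 1 := fun a =>
    conjTranspose_one_submatrix_mul_self fun u u' h => by simpa using h
  set Y := E 1 * K * (E 0)ᴴ
  have h_split : bellOmega ψ - dephasedState ψ = (2 : ℂ)⁻¹ • (Y + Yᴴ) := by
    ext ⟨a, b, u⟩ ⟨a', b', u'⟩
    fin_cases a <;> fin_cases b <;> fin_cases a' <;> fin_cases b' <;>
      simp [Y, E, K, bellOmega_apply, dephasedState, mul_apply, one_apply, partialTraceSnd,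
        vecMulVec_apply, mul_comm]
  calc traceNorm (bellOmega ψ - dephasedState ψ) = 2⁻¹ * traceNorm (Y + Yᴴ) := by
        rw [h_split, traceNorm_smul]
        norm_num
    _ ≤ 2⁻¹ * (traceNorm Y + traceNorm Yᴴ) := by
        gcongr
        exact traceNorm_add_le _ _
    _ = traceNorm K := by
        rw [traceNorm_conjTranspose, traceNorm_mul_mul_conjTranspose (hE 1) (hE 0)]
        ring

end BellState

theorem qsd_yes_to_qsep_yes_general {r s : Type*} [Fintype r] [Fintype s] [DecidableEq r]
    [DecidableEq s] (ε : ℝ) (ρ : Fin 2 → Matrix s s ℂ)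
    (ψ : Fin 2 → (r × s) → ℂ) (hρ : ∀ i, IsDensity (ρ i))
    (hpur : ∀ i v w, ρ i v w = ∑ u : r, ψ i (u, v) * (starRingEnd ℂ) (ψ i (u, w)))
    (hdist : 2 - ε ≤ traceNorm (ρ 0 - ρ 1)) :
    ∃ σ : Matrix (Fin 2 × (Fin 2 × r)) (Fin 2 × (Fin 2 × r)) ℂ,
      SeparableState σ ∧ traceNorm (bellOmega ψ - σ) ≤ 2 * Real.sqrt ε := by
  have hρψ : ∀ i, ρ i = partialTraceFst (vecMulVec (ψ i) (star (ψ i))) := fun i => by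
    ext v w
    simp [partialTraceFst, hpur, vecMulVec_apply]
  have hψ : ∀ i, star (ψ i) ⬝ᵥ ψ i = 1 := fun i => by
    rw [dotProduct_comm, ← trace_vecMulVec, ← trace_partialTraceFst, ← hρψ, (hρ i).2]
  refine ⟨dephasedState ψ, separableState_dephasedState hψ, ?_⟩
  have h_fvdg := traceNorm_partialTraceFst_sub_sq_add_sq_le_one (hψ 0) (hψ 1)
  rw [← hρψ, ← hρψ] at h_fvdg
  set K := partialTraceSnd (vecMulVec (ψ 1) (star (ψ 0)))
  have hD := traceNorm_nonneg (ρ 0 - ρ 1)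
  have hK : traceNorm K ≤ √ε := by
    refine Real.le_sqrt_of_sq_le ?_
    -- `‖K‖₁² ≤ 1 - (‖ρ₀ - ρ₁‖₁ / 2)² ≤ 1 - (1 - ε/2)² ≤ ε` if `ε ≤ 2`, else `‖K‖₁² ≤ 1 < ε`
    rcases le_or_gt ε 2 with hε | hε <;> nlinarith
  calc traceNorm (bellOmega ψ - dephasedState ψ) ≤ traceNorm K :=
        traceNorm_bellOmega_sub_dephasedState_le ψ
    _ ≤ 2 * √ε := by linarith [Real.sqrt_nonneg ε]

theorem qsd_yes_to_qsep_yes {r s : Type*} [Fintype r] [Fintype s] [DecidableEq r]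
    [DecidableEq s] (ε : ℝ) (hε : 0 ≤ ε) (ρ : Fin 2 → Matrix s s ℂ)
    (ψ : Fin 2 → (r × s) → ℂ) (hρ : ∀ i, IsDensity (ρ i))
    (hpur : ∀ i v w, ρ i v w = ∑ u : r, ψ i (u, v) * (starRingEnd ℂ) (ψ i (u, w)))
    (hdist : 2 - ε ≤ traceNorm (ρ 0 - ρ 1)) :
    ∃ σ : Matrix (Fin 2 × (Fin 2 × r)) (Fin 2 × (Fin 2 × r)) ℂ,
      SeparableState σ ∧ traceNorm (bellOmega ψ - σ) ≤ 2 * Real.sqrt ε :=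
  qsd_yes_to_qsep_yes_general ε ρ ψ hρ hpur hdist
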